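/- Let M be a 3-dimensional paracosymplectic manifold (a normal almost paracontact metric manifold with α = β = 0) and γ: I → M a slant Frenet curve of osculating order 3 with g(γ̇,γ̇) = ε₁ = ±1 and η(γ̇) = c constant. Then its curvature and torsion are κ = √|ε₁ − c²| · |δ| and τ = |cδ|, where δ = g(∇_{γ̇}γ̇, φγ̇)/|ε₁ − c²|. -/

import Mathlib

/-- The data, along a curve `γ : I → M`, of a 3-dimensional almost paracontact
metric manifold `(M, φ, ξ, η, g)`: the pullback tangent bundle is trivialized
over a real vector space `V`; `g t`, `phi t`, `xi t` are the metric, the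
structure tensor and the Reeb field at the point `γ t`, and `T t = γ̇(t)` is
the velocity of the curve.  The 1-form `η` is recovered as `η(v) = g v ξ`.
The axioms record: `η(ξ) = 1`, `φξ = 0`, `φ² = Id − η ⊗ ξ`,
`g(φv, φw) = −g(v,w) + η(v)η(w)`, symmetry of `g`, and that `g` has
signature `(2,1)` (an orthonormal basis with signs `(+,+,−)`). -/
structure APCMCurve (V : Type*) [AddCommGroup V] [Module ℝ V] where
  g : ℝ → V →ₗ[ℝ] V →ₗ[ℝ] ℝ
  phi : ℝ → V →ₗ[ℝ] V
  xi : ℝ → V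
  T : ℝ → V
  g_symm : ∀ t v w, g t v w = g t w v
  xi_unit : ∀ t, g t (xi t) (xi t) = 1
  phi_xi : ∀ t, phi t (xi t) = 0
  phi_sq : ∀ t v, phi t (phi t v) = v - g t v (xi t) • xi t
  compat : ∀ t v w, g t (phi t v) (phi t w) = -(g t v w) + g t v (xi t) * g t w (xi t)
  signature : ∀ t, ∃ e : Module.Basis (Fin 3) ℝ V,
    g t (e 0) (e 0) = 1 ∧ g t (e 1) (e 1) = 1 ∧ g t (e 2) (e 2) = -1 ∧
    g t (e 0) (e 1) = 0 ∧ g t (e 0) (e 2) = 0 ∧ g t (e 1) (e 2) = 0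

/-- The data, along a curve `γ`, of a 3-dimensional *normal* almost paracontact
metric manifold: in addition to `APCMCurve`, `D` is the covariant derivative
along `γ` (induced by the Levi-Civita connection `∇` of `g`), and
`a = α ∘ γ`, `b = β ∘ γ` are the compositions with `γ` of the structure
functions `α`, `β` of the normal structure (those with
`2α = Trace{X ↦ ∇_X ξ}`, `2β = Trace{X ↦ φ∇_X ξ}`), so that along `γ` one has
`∇_{γ̇} ξ = α(γ̇ − η(γ̇)ξ) + βφγ̇` (field `D_xi`) and
`(∇_{γ̇} φ)A = β(g(γ̇,A)ξ − η(A)γ̇) + α(g(φγ̇,A)ξ − η(A)φγ̇)` for every vector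
field `A` along `γ` (field `D_phi`).  `D` is additive, satisfies the Leibniz
rule and is metric-compatible. -/
structure NAPCMCurve (V : Type*) [AddCommGroup V] [Module ℝ V]
    extends APCMCurve V where
  D : (ℝ → V) → (ℝ → V)
  a : ℝ → ℝ
  b : ℝ → ℝ
  D_add : ∀ A B : ℝ → V, D (fun t => A t + B t) = fun t => D A t + D B t
  D_smul : ∀ (f : ℝ → ℝ) (A : ℝ → V) (t : ℝ), DifferentiableAt ℝ f t →
    D (fun s => f s • A s) t = deriv f t • A t + f t • D A t
  D_metric : ∀ (A B : ℝ → V) (t : ℝ),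
    HasDerivAt (fun s => g s (A s) (B s)) (g t (D A t) (B t) + g t (A t) (D B t)) t
  D_xi : ∀ t, D xi t = a t • (T t - g t (T t) (xi t) • xi t) + b t • phi t (T t)
  D_phi : ∀ (A : ℝ → V) (t : ℝ),
    D (fun s => phi s (A s)) t
      = b t • (g t (T t) (A t) • xi t - g t (A t) (xi t) • T t)
        + a t • (g t (phi t (T t)) (A t) • xi t - g t (A t) (xi t) • phi t (T t))
        + phi t (D A t)

/-- `γ` is a Frenet curve of osculating order 3: there are orthonormal fields
`E₁ = γ̇, E₂, E₃` along `γ` (with `g(Eᵢ,Eᵢ) = εᵢ = ±1`) and positive functions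
`κ` (curvature) and `τ` (torsion) with `∇_{γ̇}E₁ = κε₂E₂`,
`∇_{γ̇}E₂ = −κε₁E₁ + τε₃E₃` and `∇_{γ̇}E₃ = −τε₂E₂`. -/
structure FrenetOrder3 {V : Type*} [AddCommGroup V] [Module ℝ V]
    (M : NAPCMCurve V) where
  E2 : ℝ → V
  E3 : ℝ → V
  e2 : ℝ
  e3 : ℝ
  kappa : ℝ → ℝ
  tau : ℝ → ℝ
  he2 : e2 = 1 ∨ e2 = -1
  he3 : e3 = 1 ∨ e3 = -1
  kappa_pos : ∀ t, 0 < kappa t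
  tau_pos : ∀ t, 0 < tau t
  E2_unit : ∀ t, M.g t (E2 t) (E2 t) = e2
  E3_unit : ∀ t, M.g t (E3 t) (E3 t) = e3
  T_E2 : ∀ t, M.g t (M.T t) (E2 t) = 0
  T_E3 : ∀ t, M.g t (M.T t) (E3 t) = 0
  E2_E3 : ∀ t, M.g t (E2 t) (E3 t) = 0
  frenet1 : ∀ t, M.D M.T t = (kappa t * e2) • E2 t
  frenet2 : ∀ t, M.D E2 t
    = (-(kappa t) * M.g t (M.T t) (M.T t)) • M.T t + (tau t * e3) • E3 t
  frenet3 : ∀ t, M.D E3 t = (-(tau t) * e2) • E2 t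


/-! Since `α = β = 0`, `ξ` is parallel along `γ`; differentiating the constant `η(γ̇) = c`, and
then `η(E₂) = 0`, gives `η(E₂) = 0` and `τ ε₃ η(E₃) = κ ε₁ c`. The vector `φγ̇` is orthogonal to
`γ̇` and `ξ`, so in the frame `(γ̇, E₂, E₃)` it is `y E₂` for `y = g(E₂, φγ̇)`, while
`ξ = c ε₁ γ̇ + η(E₃) ε₃ E₃`. The identities `g(ξ, ξ) = 1` and `g(φγ̇, φγ̇) = c² − ε₁` then force
`η(E₃)² = y² = |ε₁ − c²|`, so `δ = κ ε₂ y / y²` gives `κ = |y| |δ|`, and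
`τ |η(E₃)| = κ |c|` gives `τ = |c δ|`. -/
namespace LinearMap.BilinForm

variable {K V ι : Type*} [Field K] [AddCommGroup V] [Module K V] [Fintype ι] [Nonempty ι]
  {B : LinearMap.BilinForm K V} {v : ι → V}

theorem eq_sum_div_smul_of_iIsOrtho (ho : B.iIsOrtho v) (hv : ∀ i, B (v i) (v i) ≠ 0)
    (hcard : Fintype.card ι = Module.finrank K V) (w : V) :
    w = ∑ i, (B (v i) w / B (v i) (v i)) • v i := by
  let b := basisOfLinearIndependentOfCardEqFinrank (linearIndependent_of_iIsOrtho ho hv) hcard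
  have hb : ⇑b = v := coe_basisOfLinearIndependentOfCardEqFinrank _ _
  have hcoeff : ∀ i, B (v i) w = b.repr w i * B (v i) (v i) := by
    intro i
    conv_lhs => rw [← b.sum_repr w, hb]
    rw [sum_right, Finset.sum_eq_single i]
    · simp
    · intro j _ hji
      simp [ho hji.symm]
    · simp
  conv_lhs => rw [← b.sum_repr w, hb]
  refine Finset.sum_congr rfl fun i _ => ?_
  rw [hcoeff, mul_div_cancel_right₀ _ (hv i)]

theorem apply_eq_sum_of_iIsOrtho (ho : B.iIsOrtho v) (hv : ∀ i, B (v i) (v i) ≠ 0)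
    (hcard : Fintype.card ι = Module.finrank K V) (u w : V) :
    B u w = ∑ i, B u (v i) * B (v i) w / B (v i) (v i) := by
  conv_lhs => rw [eq_sum_div_smul_of_iIsOrtho ho hv hcard w]
  simp only [sum_right, map_smul, smul_eq_mul]
  exact Finset.sum_congr rfl fun i _ => by ring

end LinearMap.BilinForm

namespace APCMCurve

variable {V : Type*} [AddCommGroup V] [Module ℝ V]

theorem finrank_eq_three (M : APCMCurve V) : Module.finrank ℝ V = 3 := by
  obtain ⟨e, -⟩ := M.signature 0
  simp [Module.finrank_eq_card_basis e]

variable (M : APCMCurve V)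

theorem g_phi_xi (t : ℝ) (v : V) : M.g t (M.phi t v) (M.xi t) = 0 := by
  have h := M.compat t (M.phi t v) (M.phi t v)
  rw [M.phi_sq t v] at h
  simp only [map_sub, map_smul, LinearMap.sub_apply, LinearMap.smul_apply, smul_eq_mul,
    M.g_symm t (M.xi t) v, M.xi_unit] at h
  have hsq : M.g t (M.phi t v) (M.xi t) ^ 2 = 0 := by linear_combination -h + M.compat t v v
  exact pow_eq_zero_iff two_ne_zero |>.mp hsq

theorem g_self_phi (t : ℝ) (v : V) : M.g t v (M.phi t v) = 0 := by
  have h := M.compat t v (M.phi t v)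
  simp only [M.phi_sq, map_sub, map_smul, smul_eq_mul, M.g_phi_xi, mul_zero, sub_zero,
    M.g_symm t (M.phi t v) v] at h
  linarith

end APCMCurve

namespace NAPCMCurve

variable {V : Type*} [AddCommGroup V] [Module ℝ V] (M : NAPCMCurve V)

theorem D_xi_eq_zero {t : ℝ} (ha : M.a t = 0) (hb : M.b t = 0) : M.D M.xi t = 0 := by
  simp [M.D_xi, ha, hb]

theorem g_D_add_g_D_eq_zero {A B : ℝ → V} {k : ℝ} (hconst : ∀ s, M.g s (A s) (B s) = k)
    (t : ℝ) : M.g t (M.D A t) (B t) + M.g t (A t) (M.D B t) = 0 := by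
  have hd := M.D_metric A B t
  rw [show (fun s => M.g s (A s) (B s)) = fun _ => k from funext hconst] at hd
  exact hd.unique (hasDerivAt_const t k)

theorem g_D_xi_eq_zero {A : ℝ → V} {k : ℝ} (hconst : ∀ s, M.g s (A s) (M.xi s) = k) {t : ℝ}
    (hξ : M.D M.xi t = 0) : M.g t (M.D A t) (M.xi t) = 0 := by
  simpa [hξ] using M.g_D_add_g_D_eq_zero hconst t

end NAPCMCurve

namespace FrenetOrder3

variable {V : Type*} [AddCommGroup V] [Module ℝ V] {M : NAPCMCurve V} (F : FrenetOrder3 M)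

theorem e2_ne_zero : F.e2 ≠ 0 := by rcases F.he2 with h | h <;> simp [h]

theorem e3_ne_zero : F.e3 ≠ 0 := by rcases F.he3 with h | h <;> simp [h]

theorem g_eq_sum_frame {t : ℝ} (hT : M.g t (M.T t) (M.T t) ≠ 0) (u w : V) :
    M.g t u w = M.g t (M.T t) u * M.g t (M.T t) w / M.g t (M.T t) (M.T t)
      + M.g t (F.E2 t) u * M.g t (F.E2 t) w / F.e2
      + M.g t (F.E3 t) u * M.g t (F.E3 t) w / F.e3 := by
  let v : Fin 3 → V := ![M.T t, F.E2 t, F.E3 t]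
  have ho : LinearMap.BilinForm.iIsOrtho (M.g t) v := by
    rw [LinearMap.BilinForm.iIsOrtho_def]
    intro i j hij
    fin_cases i <;> fin_cases j <;> simp_all [v, F.T_E2, F.T_E3, F.E2_E3, M.g_symm t (F.E2 t),
      M.g_symm t (F.E3 t)]
  have hv : ∀ i, M.g t (v i) (v i) ≠ 0 := by
    intro i
    fin_cases i <;> simp [v, hT, F.E2_unit, F.E3_unit, F.e2_ne_zero, F.e3_ne_zero]
  rw [LinearMap.BilinForm.apply_eq_sum_of_iIsOrtho ho hv
    (by simp [M.finrank_eq_three]) u w]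
  simp [v, Fin.sum_univ_three, M.g_symm t u, F.E2_unit, F.E3_unit]

theorem g_E2_xi (hξ : ∀ s, M.D M.xi s = 0) {c : ℝ} (hslant : ∀ s, M.g s (M.T s) (M.xi s) = c)
    (t : ℝ) : M.g t (F.E2 t) (M.xi t) = 0 := by
  have h := M.g_D_xi_eq_zero hslant (hξ t)
  simp only [F.frenet1, map_smul, LinearMap.smul_apply, smul_eq_mul] at h
  exact (mul_eq_zero.mp h).resolve_left (mul_ne_zero (F.kappa_pos t).ne' F.e2_ne_zero)

theorem tau_mul_g_E3_xi (hξ : ∀ s, M.D M.xi s = 0) {c : ℝ}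
    (hslant : ∀ s, M.g s (M.T s) (M.xi s) = c) (t : ℝ) :
    F.tau t * F.e3 * M.g t (F.E3 t) (M.xi t) = F.kappa t * M.g t (M.T t) (M.T t) * c := by
  have h := M.g_D_xi_eq_zero (F.g_E2_xi hξ hslant) (hξ t)
  simp only [F.frenet2, map_add, map_smul, LinearMap.add_apply, LinearMap.smul_apply,
    smul_eq_mul, hslant] at h
  linear_combination h

end FrenetOrder3

theorem sq_eq_abs_of_div_sign {e x a : ℝ} (he : e = 1 ∨ e = -1) (h : x * x / e = a) :
    x ^ 2 = |a| := by
  rcases he with rfl | rfl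
  · rw [← h, div_one, abs_of_nonneg (mul_self_nonneg x), sq]
  · rw [← h, div_neg, div_one, abs_neg, abs_of_nonneg (mul_self_nonneg x), sq]

theorem abs_one_sub_div_sign {e c : ℝ} (he : e = 1 ∨ e = -1) :
    |1 - c * c / e| = |e - c ^ 2| := by
  rcases he with rfl | rfl
  · ring_nf
  · rw [← abs_neg]
    ring_nf

/- With `x = η(E₃)`, `y = g(E₂, φγ̇)`, `z = g(E₃, φγ̇)`, the hypotheses `hξξ`, `hφξ`, `hφφ` are the
frame expansions of `g(ξ, ξ)`, `g(φγ̇, ξ)` and `g(φγ̇, φγ̇)`. -/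
theorem curvature_torsion_of_frame_coefficients {e1 e2 e3 c κ τ δ x y z : ℝ}
    (he1 : e1 = 1 ∨ e1 = -1) (he2 : e2 = 1 ∨ e2 = -1) (he3 : e3 = 1 ∨ e3 = -1)
    (hκ : 0 < κ) (hτ : 0 < τ)
    (hξξ : 1 = c * c / e1 + x * x / e3) (hφξ : 0 = z * x / e3)
    (hφφ : -e1 + c * c = y * y / e2 + z * z / e3) (hτx : τ * e3 * x = κ * e1 * c)
    (hδ : δ = κ * e2 * y / |e1 - c ^ 2|) :
    κ = √|e1 - c ^ 2| * |δ| ∧ τ = |c * δ| := by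
  have habs : ∀ {e : ℝ}, e = 1 ∨ e = -1 → |e| = 1 := by
    rintro e (rfl | rfl) <;> norm_num
  have hne : ∀ {e : ℝ}, e = 1 ∨ e = -1 → e ≠ 0 := by
    rintro e (rfl | rfl) <;> norm_num
  have hx : x ≠ 0 := by
    rintro rfl
    have hc : c = 0 := by simpa [hκ.ne', hne he1] using hτx.symm
    simp [hc] at hξξ
  have hz : z = 0 := by simpa [hx, hne he3] using hφξ.symm
  have hx2 : x ^ 2 = |e1 - c ^ 2| := by
    rw [← abs_one_sub_div_sign he1]
    exact sq_eq_abs_of_div_sign he3 (by linarith)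
  have hy2 : y ^ 2 = |e1 - c ^ 2| := by
    rw [abs_sub_comm]
    refine sq_eq_abs_of_div_sign he2 ?_
    rw [hz] at hφφ
    linear_combination -hφφ
  have hxy : |x| = |y| := sq_eq_sq_iff_abs_eq_abs x y |>.mp (hx2.trans hy2.symm)
  have hy : |y| ≠ 0 := hxy ▸ abs_ne_zero.mpr hx
  have habsδ : |δ| = κ / |y| := by
    rw [hδ, abs_div, abs_mul, abs_mul, abs_of_pos hκ, habs he2, abs_abs, ← hy2, ← sq_abs]
    field_simp
  have hτx' : τ * |x| = κ * |c| := by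
    simpa [abs_mul, abs_of_pos hκ, abs_of_pos hτ, habs he1, habs he3] using congrArg abs hτx
  refine ⟨?_, ?_⟩
  · rw [habsδ, ← hy2, Real.sqrt_sq_eq_abs]
    field_simp
  · rw [abs_mul, habsδ, ← hxy]
    field_simp
    linear_combination hτx'

/-- In a 3-dimensional paracosymplectic manifold (`α = β = 0`),
a slant Frenet curve of osculating order 3 has curvature `κ = √|ε₁−c²|·|δ|`
and torsion `τ = |cδ|`, where `δ = g(∇_{γ̇}γ̇, φγ̇)/|ε₁−c²|`. -/
theorem paracosymplectic_slant_curvature_torsion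
    {V : Type*} [AddCommGroup V] [Module ℝ V]
    (M : NAPCMCurve V) (F : FrenetOrder3 M)
    (ha : ∀ t, M.a t = 0) (hb : ∀ t, M.b t = 0)
    (e1 c : ℝ) (he1 : e1 = 1 ∨ e1 = -1)
    (hT : ∀ t, M.g t (M.T t) (M.T t) = e1)
    (hslant : ∀ t, M.g t (M.T t) (M.xi t) = c)
    (δ : ℝ → ℝ)
    (hδ : ∀ t, δ t = M.g t (M.D M.T t) (M.phi t (M.T t)) / |e1 - c ^ 2|) :
    ∀ t : ℝ,
      F.kappa t = Real.sqrt |e1 - c ^ 2| * |δ t| ∧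
      F.tau t = |c * δ t| := by
  intro t
  have hξ : ∀ s, M.D M.xi s = 0 := fun s => M.D_xi_eq_zero (ha s) (hb s)
  have hTT : M.g t (M.T t) (M.T t) ≠ 0 := by rcases he1 with h | h <;> simp [hT, h]
  have hξξ := F.g_eq_sum_frame hTT (M.xi t) (M.xi t)
  have hφξ := F.g_eq_sum_frame hTT (M.phi t (M.T t)) (M.xi t)
  have hφφ := F.g_eq_sum_frame hTT (M.phi t (M.T t)) (M.phi t (M.T t))
  rw [M.compat] at hφφ
  simp only [M.xi_unit, M.g_phi_xi, M.g_self_phi, hT, hslant, F.g_E2_xi hξ hslant, zero_mul,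
    mul_zero, zero_div, add_zero, zero_add] at hξξ hφξ hφφ
  refine curvature_torsion_of_frame_coefficients he1 F.he2 F.he3 (F.kappa_pos t) (F.tau_pos t)
    hξξ hφξ hφφ (by simpa [hT] using F.tau_mul_g_E3_xi hξ hslant t) ?_
  simp only [hδ, F.frenet1, map_smul, LinearMap.smul_apply, smul_eq_mul]
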